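/- Let H ∈ (1/2, 1), δ > 0, and r ≥ δ with r_δ := ⌊r/δ⌋δ ≥ δ. Then ∫₀^{r_δ} (r−s)^{−H−1/2} s^{1/2−H} ds ≤ (r − r_δ)^{1/2−H} / ((r_δ/2)^{H−1/2}(H − 1/2)) + (r_δ/2)^{3/2−H} / ((r − r_δ/2)^{H+1/2}(3/2 − H)). -/

import Mathlib

open MeasureTheory intervalIntegral Set

/-- The gridpoint projection `r ↦ r_δ = ⌊r/δ⌋ δ`. -/
noncomputable def gridPt (δ r : ℝ) : ℝ := (⌊r / δ⌋ : ℤ) * δ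

lemma not_int_degenerate (H a : ℝ) (hH1 : 1/2 < H) (ha0 : 0 < a) :
    ¬ IntervalIntegrable (fun s => (a - s) ^ (-H - 1/2) * s ^ (1/2 - H)) volume 0 a := by
  intro hint
  set p : ℝ := -H - 1/2 with hp
  have hc0 : 0 < a/2 := by linarith
  have hca : a/2 ≤ a := by linarith
  -- restrict to [a/2, a]
  have hsub : uIcc (a/2) a ⊆ uIcc 0 a := by
    rw [uIcc_of_le hca, uIcc_of_le ha0.le]
    exact Icc_subset_Icc (by linarith) le_rfl
  have hint2 : IntervalIntegrable (fun s => (a - s) ^ p * s ^ (1/2 - H)) volume (a/2) a :=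
    hint.mono_set hsub
  have hmeas : AEStronglyMeasurable (fun s : ℝ => (a - s) ^ p)
      (volume.restrict (Ioo (a/2) a)) :=
    (((continuousOn_const.sub continuousOn_id).rpow_const
      (fun x hx => Or.inl (by simp only [Pi.sub_apply, id]; intro h; have := hx.2; linarith [sub_eq_zero.mp h]))).aestronglyMeasurable
      measurableSet_Ioo)
  have hintOn : IntegrableOn (fun s => (a - s) ^ p * s ^ (1/2 - H)) (Ioo (a/2) a) volume :=
    (intervalIntegrable_iff_integrableOn_Ioo_of_le hca).1 hint2
  have hg : IntegrableOn (fun s => (a - s) ^ p) (Ioo (a/2) a) volume := by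
    refine Integrable.mono' (hintOn.const_mul (a ^ (H - 1/2))) hmeas ?_
    filter_upwards [ae_restrict_mem measurableSet_Ioo] with s hs
    have hs0 : 0 < s := lt_trans hc0 hs.1
    have h1 : a ^ (1/2 - H) ≤ s ^ (1/2 - H) :=
      Real.rpow_le_rpow_of_nonpos hs0 hs.2.le (by linarith)
    have h2 : (0:ℝ) ≤ (a - s) ^ p := Real.rpow_nonneg (by linarith [hs.2]) _
    have h3 : (1:ℝ) ≤ a ^ (H - 1/2) * s ^ (1/2 - H) := by
      have hm := mul_le_mul_of_nonneg_left h1 (Real.rpow_nonneg ha0.le (H - 1/2))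
      calc (1:ℝ) = a ^ (H - 1/2) * a ^ (1/2 - H) := by
            rw [← Real.rpow_add ha0]; norm_num
        _ ≤ a ^ (H - 1/2) * s ^ (1/2 - H) := hm
    rw [Real.norm_eq_abs, abs_of_nonneg h2]
    calc (a - s) ^ p = (a - s) ^ p * 1 := by ring
      _ ≤ (a - s) ^ p * (a ^ (H - 1/2) * s ^ (1/2 - H)) := mul_le_mul_of_nonneg_left h3 h2
      _ = a ^ (H - 1/2) * ((a - s) ^ p * s ^ (1/2 - H)) := by ring
  have hgI : IntervalIntegrable (fun s => (a - s) ^ p) volume (a/2) a :=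
    (intervalIntegrable_iff_integrableOn_Ioo_of_le hca).2 hg
  have hcomp := hgI.comp_sub_left a
  have hfe : (fun x : ℝ => (a - (a - x)) ^ p) = fun x : ℝ => x ^ p := by
    funext x; congr 1; ring
  rw [hfe] at hcomp
  rw [show a - a/2 = a/2 by ring, show a - a = 0 by ring] at hcomp
  have hOn : IntegrableOn (fun x : ℝ => x ^ p) (Ioo 0 (a/2)) volume :=
    (intervalIntegrable_iff_integrableOn_Ioo_of_le hc0.le).1 hcomp.symm
  have := (integrableOn_Ioo_rpow_iff hc0).1 hOn
  rw [hp] at this; linarith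

lemma main_aux (H a r : ℝ) (hH1 : 1/2 < H) (hH2 : H < 1)
    (ha0 : 0 < a) (har : a ≤ r) :
    ∫ s in (0:ℝ)..a, (r - s) ^ (-H - 1/2) * s ^ (1/2 - H)
      ≤ (r - a) ^ (1/2 - H) / ((a / 2) ^ (H - 1/2) * (H - 1/2))
        + (a / 2) ^ (3/2 - H) / ((r - a / 2) ^ (H + 1/2) * (3/2 - H)) := by
  have hc0 : 0 < a/2 := by linarith
  have hca : a/2 ≤ a := by linarith
  rcases eq_or_lt_of_le har with heq | hlt
  · -- degenerate case: a = r
    rw [← heq]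
    have h0 : ∫ s in (0:ℝ)..a, (a - s) ^ (-H - 1/2) * s ^ (1/2 - H) = 0 :=
      integral_undef (not_int_degenerate H a hH1 ha0)
    rw [h0, sub_self, Real.zero_rpow (by intro h; linarith : (1:ℝ)/2 - H ≠ 0),
      zero_div]
    have : (0:ℝ) ≤ (a/2) ^ (3/2 - H) / ((a - a/2) ^ (H + 1/2) * (3/2 - H)) := by
      apply div_nonneg (Real.rpow_nonneg hc0.le _)
      exact mul_nonneg (Real.rpow_nonneg (by linarith) _) (by linarith)
    linarith
  · -- main case: a < r
    have hra : 0 < r - a := by linarith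
    have hrc : 0 < r - a/2 := by linarith
    -- continuity of (r - s)^(-H-1/2) factor on [0, a/2]
    have hcont1 : ContinuousOn (fun s : ℝ => (r - s) ^ (-H - 1/2)) (uIcc 0 (a/2)) := by
      apply (continuousOn_const.sub continuousOn_id).rpow_const
      intro x hx
      rw [uIcc_of_le hc0.le] at hx
      exact Or.inl (by simp only [Pi.sub_apply, id]; intro h; linarith [sub_eq_zero.mp h, hx.2])
    have hint1 : IntervalIntegrable (fun s => (r - s) ^ (-H - 1/2) * s ^ (1/2 - H))
        volume 0 (a/2) :=
      (intervalIntegrable_rpow' (by linarith : (-1:ℝ) < 1/2 - H)).continuousOn_mul hcont1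
    -- continuity of integrand on [a/2, a]
    have hcont2 : ContinuousOn (fun s : ℝ => (r - s) ^ (-H - 1/2) * s ^ (1/2 - H))
        (uIcc (a/2) a) := by
      rw [uIcc_of_le hca]
      apply ContinuousOn.mul
      · apply (continuousOn_const.sub continuousOn_id).rpow_const
        intro x hx
        exact Or.inl (by simp only [Pi.sub_apply, id]; intro h; linarith [sub_eq_zero.mp h, hx.2])
      · apply continuousOn_id.rpow_const
        intro x hx
        exact Or.inl (by simp only [id]; intro h; linarith [hx.1, h])
    have hint2 : IntervalIntegrable (fun s => (r - s) ^ (-H - 1/2) * s ^ (1/2 - H))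
        volume (a/2) a := hcont2.intervalIntegrable
    rw [← integral_add_adjacent_intervals hint1 hint2]
    -- bound on [0, a/2]
    have hb1int : IntervalIntegrable (fun s : ℝ => (r - a/2) ^ (-H - 1/2) * s ^ (1/2 - H))
        volume 0 (a/2) :=
      (intervalIntegrable_rpow' (by linarith : (-1:ℝ) < 1/2 - H)).const_mul _
    have hI1 : (∫ s in (0:ℝ)..(a/2), (r - s) ^ (-H - 1/2) * s ^ (1/2 - H))
        ≤ ∫ s in (0:ℝ)..(a/2), (r - a/2) ^ (-H - 1/2) * s ^ (1/2 - H) := by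
      apply integral_mono_on hc0.le hint1 hb1int
      intro s hs
      have h1 : (r - s) ^ (-H - 1/2) ≤ (r - a/2) ^ (-H - 1/2) :=
        Real.rpow_le_rpow_of_nonpos hrc (by linarith [hs.2]) (by linarith)
      exact mul_le_mul_of_nonneg_right h1 (Real.rpow_nonneg hs.1 _)
    have hI1val : (∫ s in (0:ℝ)..(a/2), (r - a/2) ^ (-H - 1/2) * s ^ (1/2 - H))
        = (a/2) ^ (3/2 - H) / ((r - a/2) ^ (H + 1/2) * (3/2 - H)) := by
      rw [intervalIntegral.integral_const_mul, integral_rpow (Or.inl (by linarith : (-1:ℝ) < 1/2 - H))]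
      rw [Real.zero_rpow (by intro h; nlinarith : (1:ℝ)/2 - H + 1 ≠ 0)]
      rw [show -H - 1/2 = -(H + 1/2) by ring, Real.rpow_neg hrc.le]
      rw [show (1:ℝ)/2 - H + 1 = 3/2 - H by ring]
      have h1 : (r - a/2) ^ (H + 1/2) ≠ 0 := ne_of_gt (Real.rpow_pos_of_pos hrc _)
      field_simp
      rw [sub_zero]
    -- bound on [a/2, a]
    have hb2cont : ContinuousOn (fun s : ℝ => (a/2) ^ (1/2 - H) * (r - s) ^ (-H - 1/2))
        (uIcc (a/2) a) := by
      apply continuousOn_const.mul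
      apply (continuousOn_const.sub continuousOn_id).rpow_const
      intro x hx
      rw [uIcc_of_le hca] at hx
      exact Or.inl (by simp only [Pi.sub_apply, id]; intro h; linarith [sub_eq_zero.mp h, hx.2])
    have hI2 : (∫ s in (a/2)..a, (r - s) ^ (-H - 1/2) * s ^ (1/2 - H))
        ≤ ∫ s in (a/2)..a, (a/2) ^ (1/2 - H) * (r - s) ^ (-H - 1/2) := by
      apply integral_mono_on hca hint2 hb2cont.intervalIntegrable
      intro s hs
      have hs0 : 0 < s := lt_of_lt_of_le hc0 hs.1
      have h1 : s ^ (1/2 - H) ≤ (a/2) ^ (1/2 - H) :=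
        Real.rpow_le_rpow_of_nonpos hc0 hs.1 (by linarith)
      have h2 : (0:ℝ) ≤ (r - s) ^ (-H - 1/2) := Real.rpow_nonneg (by linarith [hs.2]) _
      calc (r - s) ^ (-H - 1/2) * s ^ (1/2 - H)
          ≤ (r - s) ^ (-H - 1/2) * (a/2) ^ (1/2 - H) := mul_le_mul_of_nonneg_left h1 h2
        _ = (a/2) ^ (1/2 - H) * (r - s) ^ (-H - 1/2) := by ring
    have hI2val : (∫ s in (a/2)..a, (a/2) ^ (1/2 - H) * (r - s) ^ (-H - 1/2))
        ≤ (r - a) ^ (1/2 - H) / ((a/2) ^ (H - 1/2) * (H - 1/2)) := by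
      rw [intervalIntegral.integral_const_mul]
      have hcs : (∫ s in (a/2)..a, (r - s) ^ (-H - 1/2))
          = ∫ x in (r - a)..(r - a/2), x ^ (-H - 1/2) := by
        rw [← integral_comp_sub_left (fun x : ℝ => x ^ (-H - 1/2)) r]
      rw [hcs, integral_rpow (Or.inr ⟨by intro h; nlinarith, by
        rw [uIcc_of_le (by linarith : r - a ≤ r - a/2)]
        intro h
        exact absurd h.1 (not_le.2 hra)⟩)]
      have h30 : (0:ℝ) < H - 1/2 := by linarith
      have hpow : (0:ℝ) ≤ (r - a/2) ^ (-H - 1/2 + 1) := Real.rpow_nonneg (by linarith) _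
      have hineq : ((r - a/2) ^ (-H - 1/2 + 1) - (r - a) ^ (-H - 1/2 + 1)) / (-H - 1/2 + 1)
          ≤ (r - a) ^ (-H - 1/2 + 1) / (H - 1/2) := by
        rw [show -H - 1/2 + 1 = -(H - 1/2) by ring, div_neg, ← neg_div, neg_sub]
        gcongr
        linarith [Real.rpow_nonneg hrc.le (-(H - 1/2))]
      have hnn : (0:ℝ) ≤ (a/2) ^ (1/2 - H) := Real.rpow_nonneg hc0.le _
      calc (a/2) ^ (1/2 - H)
            * (((r - a/2) ^ (-H - 1/2 + 1) - (r - a) ^ (-H - 1/2 + 1)) / (-H - 1/2 + 1))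
          ≤ (a/2) ^ (1/2 - H) * ((r - a) ^ (-H - 1/2 + 1) / (H - 1/2)) :=
            mul_le_mul_of_nonneg_left hineq hnn
        _ = (r - a) ^ (1/2 - H) / ((a/2) ^ (H - 1/2) * (H - 1/2)) := by
            rw [show -H - 1/2 + 1 = 1/2 - H by ring,
              show (1:ℝ)/2 - H = -(H - 1/2) by ring, Real.rpow_neg hc0.le,
              Real.rpow_neg hra.le]
            have h1 : (a/2) ^ (H - 1/2) ≠ 0 := ne_of_gt (Real.rpow_pos_of_pos hc0 _)
            field_simp
    exact (add_le_add (hI1.trans hI1val.le) (hI2.trans hI2val)).trans_eq (add_comm _ _)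

/-- for `H ∈ (1/2,1)`, `δ > 0` and `r ≥ δ`,
`∫₀^{r_δ} (r-s)^{-H-1/2} s^{1/2-H} ds
  ≤ (r-r_δ)^{1/2-H}/((r_δ/2)^{H-1/2}(H-1/2)) + (r_δ/2)^{3/2-H}/((r-r_δ/2)^{H+1/2}(3/2-H))`. -/
theorem integral_split_gridpoint_bound (H δ r : ℝ) (hH : H ∈ Set.Ioo (1/2 : ℝ) 1)
    (hδ : 0 < δ) (hr : δ ≤ r) :
    ∫ s in (0:ℝ)..(gridPt δ r), (r - s) ^ (-H - 1/2) * s ^ (1/2 - H)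
      ≤ (r - gridPt δ r) ^ (1/2 - H) / ((gridPt δ r / 2) ^ (H - 1/2) * (H - 1/2))
        + (gridPt δ r / 2) ^ (3/2 - H)
          / ((r - gridPt δ r / 2) ^ (H + 1/2) * (3/2 - H)) := by
  obtain ⟨hH1, hH2⟩ := hH
  have hfl : (1:ℝ) ≤ ((⌊r/δ⌋ : ℤ) : ℝ) := by
    exact_mod_cast Int.le_floor.2 (by simpa using (one_le_div hδ).2 hr)
  have hδa : δ ≤ gridPt δ r := by
    have h1 : (1:ℝ) * δ ≤ ((⌊r/δ⌋ : ℤ) : ℝ) * δ := mul_le_mul_of_nonneg_right hfl hδ.le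
    simpa [gridPt] using h1
  have ha0 : 0 < gridPt δ r := lt_of_lt_of_le hδ hδa
  have har : gridPt δ r ≤ r := by
    have h1 := Int.floor_le (r/δ)
    calc gridPt δ r = ((⌊r/δ⌋ : ℤ) : ℝ) * δ := rfl
      _ ≤ (r/δ) * δ := by nlinarith
      _ = r := by field_simp
  exact main_aux H (gridPt δ r) r hH1 hH2 ha0 har
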